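/- arXiv:1208.0699 — 3 statements merged into one kernel-verified Lean document; each statement's English description precedes it below -/
import Mathlib

section
/- In the schedule σₙ defined by σ₁ = [1] and σᵢ = σᵢ₋₁ ++ σᵢ₋₂ ++ ⋯ ++ σ₁ ++ [i], between any two occurrences of a symbol i < n there is an occurrence of some symbol j ≥ i+1. That is, if σₙ(a) = i = σₙ(b) with a < b and i < n, then there exists c with a < c < b and σₙ(c) > i. -/
/-- The recursively defined schedule: `sched 1 = [1]`,
`sched (n+1) = sched n ++ sched (n-1) ++ ⋯ ++ sched 1 ++ [n+1]`. -/
def sched : ℕ → List ℕ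
  | 0 => []
  | n + 1 => ((List.range n).map (fun k => sched (n - k))).flatten ++ [n + 1]
decreasing_by omega


theorem sched_succ (n : ℕ) :
    sched (n+1) = sched n ++ (sched n).dropLast ++ [n+1] := by
  cases n with
  | zero => rw [sched, sched]; rfl
  | succ m =>
    rw [show sched (m+2) = ((List.range (m+1)).map (fun k => sched (m+1-k))).flatten ++ [m+2] from by rw [sched]]
    rw [List.range_succ_eq_map, List.map_cons, List.map_map, List.flatten_cons]
    have h1 : (List.map ((fun k => sched (m + 1 - k)) ∘ Nat.succ) (List.range m)) =
        (List.map (fun k => sched (m - k)) (List.range m)) := by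
      apply List.map_congr_left; intro k _; simp [Function.comp, Nat.succ_sub_succ]
    rw [h1]
    have h2 : (List.map (fun k => sched (m - k)) (List.range m)).flatten
        = (sched (m+1)).dropLast := by
      conv_rhs => rw [sched]
      rw [List.dropLast_concat]
    rw [h2]; simp

theorem sched_mem_le {n x : ℕ} (h : x ∈ sched n) : x ≤ n := by
  induction n with
  | zero => simp [sched] at h
  | succ m ih =>
    rw [sched_succ] at h
    rcases List.mem_append.1 h with h | h
    · rcases List.mem_append.1 h with h | h
      · exact le_trans (ih h) (Nat.le_succ m)
      · exact le_trans (ih ((List.dropLast_sublist _).mem h)) (Nat.le_succ m)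
    · simp at h; omega

theorem sched_dropLast_eq (m : ℕ) :
    (sched (m+1)).dropLast = sched m ++ (sched m).dropLast := by
  rw [sched_succ, List.dropLast_concat]

theorem sched_mem_dropLast_le {m x : ℕ} (h : x ∈ (sched (m+1)).dropLast) : x ≤ m := by
  rw [sched_dropLast_eq] at h
  rcases List.mem_append.1 h with h | h
  · exact sched_mem_le h
  · exact sched_mem_le ((List.dropLast_sublist _).mem h)

theorem sched_concat (m : ℕ) : sched (m+1) = (sched (m+1)).dropLast ++ [m+1] := by
  rw [sched_dropLast_eq]; exact sched_succ m

theorem sched_get_last (k j : ℕ) (hj : j < (sched (k+1)).length)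
    (hjl : (sched (k+1)).length = j + 1) : (sched (k+1))[j] = k + 1 := by
  rw [List.getElem_of_eq (sched_concat k) hj]
  have hd : (sched (k+1)).dropLast.length = j := by simp [hjl]
  rw [List.getElem_append_right (by omega)]
  simp [hd]

theorem stmt3 (n i a b : ℕ) (ha : a < (sched n).length) (hb : b < (sched n).length)
    (hab : a < b) (hi : i < n)
    (hEa : (sched n).get ⟨a, ha⟩ = i) (hEb : (sched n).get ⟨b, hb⟩ = i) :
    ∃ c, a < c ∧ c < b ∧ ∃ hc : c < (sched n).length, i < (sched n).get ⟨c, hc⟩ := by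
  induction n generalizing i a b with
  | zero => simp [sched] at ha
  | succ m ih =>
    simp only [List.get_eq_getElem] at hEa hEb ⊢
    set S := sched m with hSdef
    clear_value S
    have hS : sched (m+1) = S ++ (S.dropLast ++ [m+1]) := by
      rw [hSdef, sched_succ, List.append_assoc]
    have hlen : (sched (m+1)).length = S.length + (S.length - 1) + 1 := by
      rw [hS]
      simp only [List.length_append, List.length_dropLast, List.length_cons,
        List.length_nil]
      omega
    have val_left : ∀ j (hj : j < S.length) (h2 : j < (sched (m+1)).length),
        (sched (m+1))[j] = S[j] := by
      intro j hj h2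
      rw [List.getElem_of_eq hS h2, List.getElem_append_left hj]
    have val_mid : ∀ j, S.length ≤ j → j < S.length + (S.length - 1) →
        ∀ (h2 : j < (sched (m+1)).length) (h3 : j - S.length < S.length),
        (sched (m+1))[j] = S[j - S.length] := by
      intro j hjl hjr h2 h3
      rw [List.getElem_of_eq hS h2,
        List.getElem_append_right (show S.length ≤ j by omega),
        List.getElem_append_left (show j - S.length < S.dropLast.length by
          simp only [List.length_dropLast]; omega),
        List.getElem_dropLast]
    have hm_of_l2 : 2 ≤ S.length → ∃ m', m = m' + 1 := by
      intro h2
      refine ⟨m - 1, ?_⟩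
      rcases m with _ | m'
      · have hS0 : S = [] := by rw [hSdef, sched]
        rw [hS0] at h2; simp at h2
      · omega
    have hbtop : b < S.length + (S.length - 1) := by
      by_contra h
      have hb' : (sched (m+1)).length = b + 1 := by omega
      have := sched_get_last m b hb hb'
      omega
    rcases lt_or_ge b S.length with hbl | hbl
    · -- both in S
      have haS : a < S.length := by omega
      have hEa' : S[a]'(haS) = i := by rw [← val_left a haS ha]; exact hEa
      have hEb' : S[b]'(hbl) = i := by rw [← val_left b hbl hb]; exact hEb
      by_cases him : i < m
      · obtain ⟨c, hc1, hc2, hc3, hc4⟩ := ih i a b haS hbl hab him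
          (by simpa using hEa') (by simpa using hEb')
        simp only [List.get_eq_getElem] at hc4
        refine ⟨c, hc1, hc2, by omega, ?_⟩
        rw [val_left c (by omega) (by omega)]
        exact hc4
      · exfalso
        have hile : i ≤ m := sched_mem_le (n := m)
          (hSdef ▸ (hEa' ▸ List.getElem_mem haS))
        have him' : i = m := by omega
        obtain ⟨m', rfl⟩ := hm_of_l2 (by omega)
        have hmem : i ∈ S.dropLast := by
          have hd : S.dropLast[a]'(by simp only [List.length_dropLast]; omega) = i := by
            rw [List.getElem_dropLast]; exact hEa'
          exact hd ▸ List.getElem_mem _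
        have := sched_mem_dropLast_le (m := m') (hSdef ▸ hmem)
        omega
    · rcases lt_or_ge a S.length with hal | hal
      · -- a in S, b in middle part
        have hj : b - S.length < S.length - 1 := by omega
        have hEb' : S[b - S.length]'(by omega) = i := by
          rw [← val_mid b hbl hbtop hb (by omega)]; exact hEb
        obtain ⟨m', rfl⟩ := hm_of_l2 (by omega)
        have hSlen : (sched (m' + 1)).length = S.length := by rw [hSdef]
        have hmem : i ∈ S.dropLast := by
          have hd : S.dropLast[b - S.length]'(by
              simp only [List.length_dropLast]; omega) = i := by
            rw [List.getElem_dropLast]; exact hEb'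
          exact hd ▸ List.getElem_mem _
        have hile : i ≤ m' := sched_mem_dropLast_le (m := m') (hSdef ▸ hmem)
        have hlast : S[S.length - 1]'(by omega) = m' + 1 := by
          have h1 : (S.length - 1) < (sched (m' + 1)).length := by
            rw [hSlen]; omega
          have h2 : (sched (m' + 1)).length = (S.length - 1) + 1 := by
            rw [hSlen]; omega
          rw [List.getElem_of_eq hSdef]
          exact sched_get_last m' _ h1 h2
        have hane : a < S.length - 1 := by
          rcases Nat.lt_or_ge a (S.length - 1) with h | h
          · exact h
          · exfalso
            have haeq : a = S.length - 1 := by omega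
            subst haeq
            have : S[S.length - 1]'(by omega) = i := by
              rw [← val_left _ hal ha]; exact hEa
            omega
        refine ⟨S.length - 1, hane, by omega, by omega, ?_⟩
        rw [val_left (S.length - 1) (by omega) (by omega), hlast]
        omega
      · -- both in middle part
        have hja : a - S.length < S.length - 1 := by omega
        have hjb : b - S.length < S.length - 1 := by omega
        have hEa' : S[a - S.length]'(by omega) = i := by
          rw [← val_mid a hal (by omega) ha (by omega)]; exact hEa
        have hEb' : S[b - S.length]'(by omega) = i := by
          rw [← val_mid b hbl hbtop hb (by omega)]; exact hEb
        obtain ⟨m', rfl⟩ := hm_of_l2 (by omega)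
        have hmem : i ∈ S.dropLast := by
          have hd : S.dropLast[b - S.length]'(by
              simp only [List.length_dropLast]; omega) = i := by
            rw [List.getElem_dropLast]; exact hEb'
          exact hd ▸ List.getElem_mem _
        have him : i < m' + 1 := by
          have := sched_mem_dropLast_le (m := m') (hSdef ▸ hmem); omega
        obtain ⟨c, hc1, hc2, hc3, hc4⟩ := ih i (a - S.length) (b - S.length)
          (by omega) (by omega) (by omega) him (by simpa using hEa') (by simpa using hEb')
        simp only [List.get_eq_getElem] at hc4
        refine ⟨S.length + c, by omega, by omega, by omega, ?_⟩
        rw [val_mid (S.length + c) (by omega) (by omega) (by omega) (by omega)]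
        simp only [Nat.add_sub_cancel_left]
        exact hc4
end

section
/- For a 2-player potential game on strategy sets S₁ × S₂ with potential Φ, the logit dynamics with parameter β ≥ 0 (select one player uniformly at random, update her strategy s_i with probability proportional to e^{β u_i(s_i, s_{-i})}) is a reversible Markov chain with stationary distribution π(s) = e^{−βΦ(s)}/Z where Z = Σ_{s'} e^{−βΦ(s')}. -/
open scoped Classical

variable {S1 S2 : Type*}

/-- Logit update rule for player 1: probability of switching to strategy `a` given the
opponent plays `b`. -/
noncomputable def logit1 [Fintype S1] (u1 : S1 × S2 → ℝ) (β : ℝ) (a : S1) (b : S2) : ℝ :=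
  Real.exp (β * u1 (a, b)) / ∑ a' : S1, Real.exp (β * u1 (a', b))

/-- Logit update rule for player 2. -/
noncomputable def logit2 [Fintype S2] (u2 : S1 × S2 → ℝ) (β : ℝ) (a : S1) (b : S2) : ℝ :=
  Real.exp (β * u2 (a, b)) / ∑ b' : S2, Real.exp (β * u2 (a, b'))

/-- Transition matrix of the 2-player logit dynamics: select one of the two players
uniformly at random and update her strategy with the logit rule. -/
noncomputable def logitTrans [Fintype S1] [Fintype S2]
    (u1 u2 : S1 × S2 → ℝ) (β : ℝ) (s s' : S1 × S2) : ℝ :=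
  (1 / 2) *
    (if s'.2 = s.2 ∧ s'.1 ≠ s.1 then logit1 u1 β s'.1 s.2
     else if s'.1 = s.1 ∧ s'.2 ≠ s.2 then logit2 u2 β s.1 s'.2
     else if s' = s then logit1 u1 β s.1 s.2 + logit2 u2 β s.1 s.2
     else 0)

/-- The Gibbs distribution `π(s) = e^{-βΦ(s)}/Z`. -/
noncomputable def gibbs [Fintype S1] [Fintype S2] (Φ : S1 × S2 → ℝ) (β : ℝ)
    (s : S1 × S2) : ℝ :=
  Real.exp (-β * Φ s) / ∑ s' : S1 × S2, Real.exp (-β * Φ s')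


lemma sum_exp_ne {S : Type*} [Fintype S] [Nonempty S] (f : S → ℝ) :
    (∑ a : S, Real.exp (f a)) ≠ 0 :=
  ne_of_gt (Finset.sum_pos (fun _ _ => Real.exp_pos _) Finset.univ_nonempty)

lemma sum_logit1 [Fintype S1] [Nonempty S1] (u1 : S1 × S2 → ℝ) (β : ℝ) (b : S2) :
    ∑ a : S1, logit1 u1 β a b = 1 := by
  unfold logit1
  rw [← Finset.sum_div]
  exact div_self (sum_exp_ne _)

lemma sum_logit2 [Fintype S2] [Nonempty S2] (u2 : S1 × S2 → ℝ) (β : ℝ) (a : S1) :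
    ∑ b : S2, logit2 u2 β a b = 1 := by
  unfold logit2
  rw [← Finset.sum_div]
  exact div_self (sum_exp_ne _)

lemma logitTrans_eq [Fintype S1] [Fintype S2] (u1 u2 : S1 × S2 → ℝ) (β : ℝ)
    (s' s : S1 × S2) :
    logitTrans u1 u2 β s' s = (1 / 2) *
      ((if s.2 = s'.2 then logit1 u1 β s.1 s'.2 else 0) +
       (if s.1 = s'.1 then logit2 u2 β s'.1 s.2 else 0)) := by
  unfold logitTrans
  by_cases h2 : s.2 = s'.2 <;> by_cases h1 : s.1 = s'.1 <;>
    simp [h1, h2, Prod.ext_iff]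

lemma rowsum [Fintype S1] [Fintype S2] [Nonempty S1] [Nonempty S2]
    (u1 u2 : S1 × S2 → ℝ) (β : ℝ) (s' : S1 × S2) :
    ∑ s : S1 × S2, logitTrans u1 u2 β s' s = 1 := by
  simp only [logitTrans_eq]
  rw [← Finset.mul_sum]
  have h1 : ∑ s : S1 × S2,
      ((if s.2 = s'.2 then logit1 u1 β s.1 s'.2 else 0) +
       (if s.1 = s'.1 then logit2 u2 β s'.1 s.2 else 0)) =
      (∑ a : S1, logit1 u1 β a s'.2) + (∑ b : S2, logit2 u2 β s'.1 b) := by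
    rw [Finset.sum_add_distrib, Fintype.sum_prod_type, Fintype.sum_prod_type]
    congr 1
    · simp
    · rw [Finset.sum_comm]
      simp
  rw [h1, sum_logit1, sum_logit2]
  norm_num

/-- For a 2-player potential game with potential `Φ`, the logit dynamics with parameter
`β ≥ 0` is reversible with respect to the Gibbs distribution `π(s) = e^{-βΦ(s)}/Z`,
and `π` is stationary for it. -/
theorem stmt18 [Fintype S1] [Fintype S2] [Nonempty S1] [Nonempty S2]
    (u1 u2 Φ : S1 × S2 → ℝ) (β : ℝ) (hβ : 0 ≤ β)
    (hpot1 : ∀ (a a' : S1) (b : S2),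
      Φ (a, b) - Φ (a', b) = u1 (a', b) - u1 (a, b))
    (hpot2 : ∀ (a : S1) (b b' : S2),
      Φ (a, b) - Φ (a, b') = u2 (a, b') - u2 (a, b)) :
    (∀ s s' : S1 × S2,
        gibbs Φ β s * logitTrans u1 u2 β s s' = gibbs Φ β s' * logitTrans u1 u2 β s' s) ∧
      (∀ s' : S1 × S2,
        ∑ s : S1 × S2, gibbs Φ β s * logitTrans u1 u2 β s s' = gibbs Φ β s') := by
  have hrev : ∀ s s' : S1 × S2,
      gibbs Φ β s * logitTrans u1 u2 β s s' = gibbs Φ β s' * logitTrans u1 u2 β s' s := by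
    rintro ⟨a, b⟩ ⟨a', b'⟩
    by_cases h2 : b' = b
    · subst h2
      by_cases h1 : a' = a
      · subst h1; rfl
      · have hD := sum_exp_ne (fun a'' : S1 => β * u1 (a'', b'))
        have hZ := sum_exp_ne (fun s : S1 × S2 => -β * Φ s)
        have key : Real.exp (-β * Φ (a, b')) * Real.exp (β * u1 (a', b')) =
            Real.exp (-β * Φ (a', b')) * Real.exp (β * u1 (a, b')) := by
          rw [← Real.exp_add, ← Real.exp_add]
          congr 1
          linear_combination (-β) * hpot1 a a' b'
        simp only [gibbs, logitTrans, logit1]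
        simp only [h1, Ne.symm h1, ne_eq, not_false_iff, and_true, if_true, true_and]
        simp only [neg_mul] at key ⊢
        field_simp
        linear_combination key
    · by_cases h1 : a' = a
      · subst h1
        have hD := sum_exp_ne (fun b'' : S2 => β * u2 (a', b''))
        have hZ := sum_exp_ne (fun s : S1 × S2 => -β * Φ s)
        have key : Real.exp (-β * Φ (a', b)) * Real.exp (β * u2 (a', b')) =
            Real.exp (-β * Φ (a', b')) * Real.exp (β * u2 (a', b)) := by
          rw [← Real.exp_add, ← Real.exp_add]
          congr 1
          linear_combination (-β) * hpot2 a' b b'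
        simp only [gibbs, logitTrans, logit2]
        simp only [h2, Ne.symm h2, ne_eq, not_false_iff, and_true, if_true, true_and,
          not_true, and_false, false_and, if_false]
        simp only [neg_mul] at key ⊢
        field_simp
        linear_combination key
      · have e1 : logitTrans u1 u2 β (a, b) (a', b') = 0 := by
          simp only [logitTrans, Prod.ext_iff]
          rw [if_neg (fun h => h2 h.1), if_neg (fun h => h1 h.1),
            if_neg (fun h => h1 h.1)]
          ring
        have e2 : logitTrans u1 u2 β (a', b') (a, b) = 0 := by
          simp only [logitTrans, Prod.ext_iff]
          rw [if_neg (fun h => h2 h.1.symm), if_neg (fun h => h1 h.1.symm),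
            if_neg (fun h => h1 h.1.symm)]
          ring
        rw [e1, e2, mul_zero, mul_zero]
  refine ⟨hrev, fun s' => ?_⟩
  rw [Finset.sum_congr rfl (fun s _ => hrev s s'), ← Finset.mul_sum, rowsum, mul_one]
end

section
/- The n-player game in which each player i has strategy set {0,1}, and prefers strategy 1 when all players j < i play 1 (i.e. u_i(1_{1..i-1}, 1, s_{i+1..n}) > u_i(1_{1..i-1}, 0, s_{i+1..n}) for all s) and prefers strategy 0 otherwise (u_i(s_{-i},0) > u_i(s_{-i},1) whenever s_{1..i-1} ≠ 1_{1..i-1}), is NBR-solvable with elimination sequence of length n, and its unique pure Nash equilibrium is the all-ones profile (1,…,1). -/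
/-- `b` is a never-best-response for player `i` in the subgame where each player `j` is
restricted to the strategy set `T j`: against every profile of the subgame there is a
strictly better available strategy. -/
def NBRin {n : ℕ} (u : Fin n → (Fin n → Bool) → ℝ) (T : Fin n → Set Bool)
    (i : Fin n) (b : Bool) : Prop :=
  b ∈ T i ∧ ∀ s : Fin n → Bool, (∀ j, s j ∈ T j) →
    ∃ b' ∈ T i, u i (Function.update s i b) < u i (Function.update s i b')

/-- `T'` is obtained from `T` by letting one player eliminate (a nonempty set of)
strategies which are never-best-responses in the subgame `T`. -/
def ElimStep {n : ℕ} (u : Fin n → (Fin n → Bool) → ℝ)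
    (T T' : Fin n → Set Bool) : Prop :=
  ∃ i : Fin n, (∀ j, j ≠ i → T' j = T j) ∧ T' i ⊂ T i ∧ (T' i).Nonempty ∧
    ∀ b ∈ T i \ T' i, NBRin u T i b

/-- A profile `s` is a pure Nash equilibrium of the (full) game. -/
def IsPNE {n : ℕ} (u : Fin n → (Fin n → Bool) → ℝ) (s : Fin n → Bool) : Prop :=
  ∀ (i : Fin n) (b : Bool), u i (Function.update s i b) ≤ u i s

/-- The `n`-player game in which player `i` prefers `1` iff all players `j < i` play `1`
is NBR-solvable via an elimination sequence of length `n` ending in the all-ones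
profile, which is the unique pure Nash equilibrium. -/
theorem stmt19 (n : ℕ) (hn : 1 ≤ n) (u : Fin n → (Fin n → Bool) → ℝ)
    (hpref1 : ∀ (i : Fin n) (s : Fin n → Bool), (∀ j, j < i → s j = true) →
      u i (Function.update s i false) < u i (Function.update s i true))
    (hpref0 : ∀ (i : Fin n) (s : Fin n → Bool), ¬ (∀ j, j < i → s j = true) →
      u i (Function.update s i true) < u i (Function.update s i false)) :
    (∃ G : ℕ → (Fin n → Set Bool),
      G 0 = (fun _ => Set.univ) ∧
      (∀ k, k < n → ElimStep u (G k) (G (k + 1))) ∧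
      G n = (fun _ => {true})) ∧
    (∀ s : Fin n → Bool, IsPNE u s ↔ s = fun _ => true) := by
  constructor
  · refine ⟨fun k j => if (j : ℕ) < k then {true} else Set.univ, ?_, ?_, ?_⟩
    · funext j; simp
    · intro k hk
      refine ⟨⟨k, hk⟩, ?_, ?_, ⟨true, by simp⟩, ?_⟩
      · intro j hj
        have : (j : ℕ) ≠ k := fun h => hj (Fin.ext h)
        by_cases h : (j : ℕ) < k
        · simp [h, Nat.lt_succ_of_lt h]
        · have h' : ¬ (j : ℕ) < k + 1 := by omega
          simp [h, h']
      · simp only [Fin.val_mk, Nat.lt_irrefl, if_false, Nat.lt_succ_self, if_true]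
        constructor
        · intro x _; trivial
        · intro hsub
          have : (false : Bool) ∈ ({true} : Set Bool) := hsub trivial
          simp at this
      · intro b hb
        simp only [Fin.val_mk, Nat.lt_irrefl, if_false, Nat.lt_succ_self, if_true,
          Set.mem_diff, Set.mem_univ, true_and, Set.mem_singleton_iff] at hb
        have hbf : b = false := by cases b <;> simp_all
        subst hbf
        refine ⟨by simp, fun s hs => ⟨true, by simp, ?_⟩⟩
        apply hpref1
        intro j hj
        have := hs j
        have hjk : (j : ℕ) < k := hj
        simpa [hjk] using this
    · funext j
      simp [j.isLt]
  · intro s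
    constructor
    · intro hs
      have key : ∀ m : ℕ, ∀ i : Fin n, (i : ℕ) = m → s i = true := by
        intro m
        induction m using Nat.strong_induction_on with
        | _ m ihm =>
        intro i him
        by_contra h
        have ih : ∀ j : Fin n, j < i → s j = true := fun j hj =>
          ihm j (by omega) j rfl
        have hsi : s i = false := by cases hsi : s i <;> simp_all
        have hlt : u i (Function.update s i false) < u i (Function.update s i true) := by
          apply hpref1
          intro j hj
          exact ih j hj
        have heq : Function.update s i false = s := by
          funext j
          by_cases hji : j = i
          · subst hji; simp [hsi]
          · simp [Function.update_of_ne hji]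
        rw [heq] at hlt
        exact absurd (hs i true) (not_le.mpr hlt)
      funext i
      exact key i i rfl
    · intro hs
      subst hs
      intro i b
      cases b
      · have := hpref1 i (fun _ => true) (fun _ _ => rfl)
        have heq : Function.update (fun _ : Fin n => true) i true = fun _ => true := by
          funext j; by_cases hji : j = i
          · subst hji; simp
          · simp [Function.update_of_ne hji]
        rw [heq] at this
        exact this.le
      · have heq : Function.update (fun _ : Fin n => true) i true = fun _ => true := by
          funext j; by_cases hji : j = i
          · subst hji; simp
          · simp [Function.update_of_ne hji]
        rw [heq]
end
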